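/- Over 𝔽₂, the following three identities hold (commutativity of the state-cube face in case 4.a, where circles a, b, c are all homotopically nontrivial and the merged circles ab and bc are both trivial): (Δ⁰ ⊗ id) ∘ Δ² = (id ⊗ Δ⁰) ∘ Δ¹ as maps V → V⊗V⊗V; (m⁰ ⊗ id) ∘ (id ⊗ Δ⁰) = Δ² ∘ m¹ as maps V⊗V → V⊗V; and m² ∘ (m⁰ ⊗ id) = m¹ ∘ (id ⊗ m⁰) as maps V⊗V⊗V → V. -/
import Mathlib
open TensorProduct
noncomputable section
abbrev F2 : Type := ZMod 2

/-- The two-dimensional `𝔽₂`-vector space `V` with basis `v₊, v₋`,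
realized as pairs of coordinates in this basis. -/
abbrev V : Type := F2 × F2

/-- The basis vector `v₊`. -/
def vp : V := (1, 0)

/-- The basis vector `v₋`. -/
def vm : V := (0, 1)

/-- Helper: the bilinear map associated to a pair of bilinear coordinate forms. -/
def bil (f : V → V → V)
    (ha : ∀ x x' y, f (x + x') y = f x y + f x' y)
    (hs : ∀ (c : F2) x y, f (c • x) y = c • f x y)
    (ha' : ∀ x y y', f x (y + y') = f x y + f x y')
    (hs' : ∀ (c : F2) x y, f x (c • y) = c • f x y) :
    V ⊗[F2] V →ₗ[F2] V :=
  TensorProduct.lift (LinearMap.mk₂ F2 f ha hs ha' hs')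

/-- The multiplication `m` of the Khovanov complex:
`m(v₊⊗v₊)=v₊, m(v₊⊗v₋)=v₋, m(v₋⊗v₊)=v₋, m(v₋⊗v₋)=0`. -/
def mKh : V ⊗[F2] V →ₗ[F2] V :=
  bil (fun x y => (x.1 * y.1, x.1 * y.2 + x.2 * y.1))
    (by intros; apply Prod.ext <;> simp <;> ring)
    (by intros; apply Prod.ext <;> simp [smul_eq_mul] <;> ring)
    (by intros; apply Prod.ext <;> simp <;> ring)
    (by intros; apply Prod.ext <;> simp [smul_eq_mul] <;> ring)

/-- The map `m⁰`: `m⁰(v₊⊗v₊)=0, m⁰(v₊⊗v₋)=v₋, m⁰(v₋⊗v₊)=v₋, m⁰(v₋⊗v₋)=0`. -/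
def m0 : V ⊗[F2] V →ₗ[F2] V :=
  bil (fun x y => (0, x.1 * y.2 + x.2 * y.1))
    (by intros; apply Prod.ext <;> simp <;> ring)
    (by intros; apply Prod.ext <;> simp [smul_eq_mul] <;> ring)
    (by intros; apply Prod.ext <;> simp <;> ring)
    (by intros; apply Prod.ext <;> simp [smul_eq_mul] <;> ring)

/-- The map `m¹`: `m¹(v₊⊗v₊)=v₊, m¹(v₊⊗v₋)=0, m¹(v₋⊗v₊)=v₋, m¹(v₋⊗v₋)=0`. -/
def m1 : V ⊗[F2] V →ₗ[F2] V :=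
  bil (fun x y => (x.1 * y.1, x.2 * y.1))
    (by intros; apply Prod.ext <;> simp <;> ring)
    (by intros; apply Prod.ext <;> simp [smul_eq_mul] <;> ring)
    (by intros; apply Prod.ext <;> simp <;> ring)
    (by intros; apply Prod.ext <;> simp [smul_eq_mul] <;> ring)

/-- The map `m²`: `m²(v₊⊗v₊)=v₊, m²(v₊⊗v₋)=v₋, m²(v₋⊗v₊)=0, m²(v₋⊗v₋)=0`. -/
def m2 : V ⊗[F2] V →ₗ[F2] V :=
  bil (fun x y => (x.1 * y.1, x.1 * y.2))
    (by intros; apply Prod.ext <;> simp <;> ring)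
    (by intros; apply Prod.ext <;> simp [smul_eq_mul] <;> ring)
    (by intros; apply Prod.ext <;> simp <;> ring)
    (by intros; apply Prod.ext <;> simp [smul_eq_mul] <;> ring)

/-- Helper: the linear map `V → V ⊗ V` sending `v₊ ↦ a` and `v₋ ↦ b`. -/
def diag (a b : V ⊗[F2] V) : V →ₗ[F2] V ⊗[F2] V :=
  (LinearMap.fst F2 F2 F2).smulRight a + (LinearMap.snd F2 F2 F2).smulRight b

/-- The comultiplication `Δ`: `Δ(v₊)=v₊⊗v₋+v₋⊗v₊, Δ(v₋)=v₋⊗v₋`. -/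
def ΔKh : V →ₗ[F2] V ⊗[F2] V := diag (vp ⊗ₜ vm + vm ⊗ₜ vp) (vm ⊗ₜ vm)

/-- The map `Δ⁰`: `Δ⁰(v₊)=v₊⊗v₋+v₋⊗v₊, Δ⁰(v₋)=0`. -/
def Δ0 : V →ₗ[F2] V ⊗[F2] V := diag (vp ⊗ₜ vm + vm ⊗ₜ vp) 0

/-- The map `Δ¹`: `Δ¹(v₊)=v₊⊗v₋, Δ¹(v₋)=v₋⊗v₋`. -/
def Δ1 : V →ₗ[F2] V ⊗[F2] V := diag (vp ⊗ₜ vm) (vm ⊗ₜ vm)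

/-- The map `Δ²`: `Δ²(v₊)=v₋⊗v₊, Δ²(v₋)=v₋⊗v₋`. -/
def Δ2 : V →ₗ[F2] V ⊗[F2] V := diag (vm ⊗ₜ vp) (vm ⊗ₜ vm)

/-- The associator `(V ⊗ V) ⊗ V ≃ V ⊗ (V ⊗ V)` as a linear map. -/
noncomputable def α : (V ⊗[F2] V) ⊗[F2] V →ₗ[F2] V ⊗[F2] (V ⊗[F2] V) :=
  (TensorProduct.assoc F2 V V V).toLinearMap

/-- The inverse associator as a linear map. -/
noncomputable def αinv : V ⊗[F2] (V ⊗[F2] V) →ₗ[F2] (V ⊗[F2] V) ⊗[F2] V :=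
  (TensorProduct.assoc F2 V V V).symm.toLinearMap

lemma diag_apply (a b : V ⊗[F2] V) (v : V) : diag a b v = v.1 • a + v.2 • b := rfl

lemma bil_tmul (f ha hs ha' hs') (x y : V) :
    bil f ha hs ha' hs' (x ⊗ₜ y) = f x y := rfl

lemma vdec (v : V) : v = v.1 • vp + v.2 • vm := by
  apply Prod.ext <;> simp [vp, vm]

lemma α_tmul (a b c : V) : α ((a ⊗ₜ b) ⊗ₜ c) = a ⊗ₜ (b ⊗ₜ c) := rfl

set_option synthInstance.maxHeartbeats 1000000 in
/-- case 4.a face commutativity: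
`(Δ⁰ ⊗ id) ∘ Δ² = (id ⊗ Δ⁰) ∘ Δ¹`, `(m⁰ ⊗ id) ∘ (id ⊗ Δ⁰) = Δ² ∘ m¹`,
`m² ∘ (m⁰ ⊗ id) = m¹ ∘ (id ⊗ m⁰)`. -/
theorem face_case_4a :
    α ∘ₗ Δ0.rTensor V ∘ₗ Δ2 = Δ0.lTensor V ∘ₗ Δ1 ∧
    m0.rTensor V ∘ₗ αinv ∘ₗ Δ0.lTensor V = Δ2 ∘ₗ m1 ∧
    m2 ∘ₗ m0.rTensor V = m1 ∘ₗ m0.lTensor V ∘ₗ α := by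
  refine ⟨?_, ?_, ?_⟩
  · apply LinearMap.ext; intro v
    rw [show v = v.1 • vp + v.2 • vm from vdec v]
    simp [Δ0, Δ1, Δ2, diag_apply, vp, vm, tmul_add, add_tmul, smul_tmul', α_tmul]
  · apply TensorProduct.ext'; intro x y
    rw [show x = x.1 • vp + x.2 • vm from vdec x, show y = y.1 • vp + y.2 • vm from vdec y]
    simp [Δ0, Δ2, αinv, m0, m1, bil_tmul, diag_apply, vp, vm, tmul_add, add_tmul, smul_tmul', tmul_smul, TensorProduct.assoc_symm_tmul, LinearEquiv.coe_coe]
    abel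
  · apply TensorProduct.ext'; intro xy z
    induction xy using TensorProduct.induction_on with
    | zero => simp
    | add a b ha hb => simp_all [add_tmul]
    | tmul x y =>
      simp [m0, m1, m2, bil_tmul, α_tmul]
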